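/- arXiv:1411.1161 — 3 statements merged into one kernel-verified Lean document; each statement's English description precedes it below -/
import Mathlib

section
/- Let q be a prime and let η = m/n with m, n coprime positive integers. Suppose K ≥ 2 distinct joint symbols (w_{A,1}, w_{B,1}),…,(w_{A,K}, w_{B,K}) in {0,…,q−1}² all have the same superimposed value: η·w_{A,i} + w_{B,i} = η·w_{A,j} + w_{B,j} for all i, j. Then with (α, β) = (m mod q, n mod q) in GF(q), we have α·w_{A,i} + β·w_{B,i} = α·w_{A,j} + β·w_{B,j} in GF(q) for all i, j, and moreover w_{A,i} ≠ w_{A,j} and w_{B,i} ≠ w_{B,j} for all i ≠ j. -/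
theorem stmt6 (q : ℕ) (hq : q.Prime) (m n : ℕ) (hm : 0 < m) (hn : 0 < n)
    (hcop : Nat.Coprime m n) (K : ℕ) (hK : 2 ≤ K)
    (w : Fin K → ℤ × ℤ) (hinj : Function.Injective w)
    (hbounds : ∀ i, 0 ≤ (w i).1 ∧ (w i).1 ≤ (q : ℤ) - 1 ∧ 0 ≤ (w i).2 ∧ (w i).2 ≤ (q : ℤ) - 1)
    (hover : ∀ i j, ((m : ℝ) / n) * ((w i).1 : ℝ) + ((w i).2 : ℝ)
                  = ((m : ℝ) / n) * ((w j).1 : ℝ) + ((w j).2 : ℝ)) :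
    (∀ i j, (m : ZMod q) * ((w i).1 : ZMod q) + (n : ZMod q) * ((w i).2 : ZMod q)
          = (m : ZMod q) * ((w j).1 : ZMod q) + (n : ZMod q) * ((w j).2 : ZMod q)) ∧
    (∀ i j, i ≠ j → (w i).1 ≠ (w j).1 ∧ (w i).2 ≠ (w j).2) := by
  have hn0 : (n : ℝ) ≠ 0 := Nat.cast_ne_zero.mpr hn.ne'
  have hmZ : (0 : ℤ) < m := Int.natCast_pos.mpr hm
  have hnZ : (0 : ℤ) < n := Int.natCast_pos.mpr hn
  have key : ∀ i j, (m : ℤ) * (w i).1 + n * (w i).2 = m * (w j).1 + n * (w j).2 := by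
    intro i j
    have h := hover i j
    have hr : (m : ℝ) * (w i).1 + n * (w i).2 = m * (w j).1 + n * (w j).2 := by
      field_simp at h
      linarith
    exact_mod_cast hr
  constructor
  · intro i j
    have := congrArg (Int.cast : ℤ → ZMod q) (key i j)
    push_cast at this
    exact this
  · intro i j hij
    have hw : w i ≠ w j := fun h => hij (hinj h)
    constructor
    · intro h1
      apply hw
      have h2 : (w i).2 = (w j).2 := by
        have := key i j
        rw [h1] at this
        have : (n : ℤ) * (w i).2 = n * (w j).2 := by linarith
        exact mul_left_cancel₀ hnZ.ne' this
      exact Prod.ext h1 h2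
    · intro h2
      apply hw
      have h1 : (w i).1 = (w j).1 := by
        have := key i j
        rw [h2] at this
        have : (m : ℤ) * (w i).1 = m * (w j).1 := by linarith
        exact mul_left_cancel₀ hmZ.ne' this
      exact Prod.ext h1 h2
end

section
/- Let q be a prime and let m, n be coprime positive integers with 1 ≤ n ≤ q−1, 1 ≤ m ≤ q−1, and m > n (so η = m/n satisfies 1 < η < q−1 when m/n < q−1). Then the minimum over all joint symbols (w_A, w_B) ∈ {0,…,q−1}², (w_A,w_B) ≠ (0,q−1), of |(m/n)·w_A + w_B − (q−1)| restricted to nonzero values equals 1/n. In particular, the minimum nonzero distance from the reference superimposed symbol q−1 to any other superimposed symbol is exactly 1/n. -/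
/-! Writing `(m/n)·w_A + w_B − (q−1) = (m·w_A + n·(w_B − (q−1)))/n`, every nonzero distance is
an integer multiple of `1/n`, hence at least `1/n`. The bound is attained because `m` is invertible
modulo `n`: some `1 ≤ w_A ≤ n` has `m·w_A = n·k + 1` with `0 ≤ k < m`, and `w_B = q − 1 − k`
is then an admissible symbol at distance exactly `1/n`. -/

theorem Nat.exists_mul_eq_mul_add_one_of_coprime {m n : ℕ} (hm : 0 < m) (hn : 0 < n)
    (hcop : m.Coprime n) : ∃ a k : ℕ, 0 < a ∧ a ≤ n ∧ k < m ∧ m * a = n * k + 1 := by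
  obtain rfl | hn1 : n = 1 ∨ 1 < n := by omega
  · exact ⟨1, m - 1, Nat.one_pos, le_rfl, by omega, by omega⟩
  obtain ⟨a, han, ha⟩ := Nat.exists_mul_mod_eq_one_of_coprime hcop hn1
  have ha0 : a ≠ 0 := by
    rintro rfl
    simp at ha
  have hk : m * a / n < m :=
    (Nat.div_lt_iff_lt_mul hn).2 (Nat.mul_lt_mul_of_pos_left han hm)
  exact ⟨a, m * a / n, Nat.pos_of_ne_zero ha0, han.le, hk, by
    have := Nat.div_add_mod (m * a) n; omega⟩

theorem one_div_le_abs_intCast_div {N : ℤ} {r : ℝ} (hr : 0 < r) (hN : (N : ℝ) / r ≠ 0) :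
    1 / r ≤ |(N : ℝ) / r| := by
  rw [abs_div, abs_of_pos hr]
  gcongr
  exact_mod_cast Int.one_le_abs (by rintro rfl; simp at hN)

theorem div_mul_add_sub_eq_intCast_div {m n : ℕ} (hn : n ≠ 0) (a b c : ℤ) :
    (m / n : ℝ) * a + b - c = ((m * a + n * (b - c) : ℤ) : ℝ) / n := by
  push_cast
  field_simp
  ring

theorem stmt12_general (q : ℕ) (m n : ℕ)
    (hm : 1 ≤ m ∧ m ≤ q - 1) (hn : 1 ≤ n ∧ n ≤ q - 1)
    (hcop : Nat.Coprime m n) :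
    IsLeast {d : ℝ | ∃ wA wB : ℤ, 0 ≤ wA ∧ wA ≤ (q : ℤ) - 1 ∧ 0 ≤ wB ∧ wB ≤ (q : ℤ) - 1 ∧
        (wA, wB) ≠ (0, (q : ℤ) - 1) ∧
        d = |((m : ℝ) / n) * (wA : ℝ) + (wB : ℝ) - ((q : ℝ) - 1)| ∧ d ≠ 0}
      (1 / n) := by
  have hn0 : n ≠ 0 := by omega
  have hq_cast : (q : ℝ) - 1 = (((q : ℤ) - 1 : ℤ) : ℝ) := by push_cast; ring
  simp only [hq_cast, div_mul_add_sub_eq_intCast_div hn0]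
  constructor
  · obtain ⟨a, k, ha, han, hkm, hak⟩ :=
      Nat.exists_mul_eq_mul_add_one_of_coprime hm.1 hn.1 hcop
    have hone : (m : ℤ) * a + n * ((q - 1 - k) - (q - 1)) = 1 := by linarith
    refine ⟨a, q - 1 - k, by omega, by omega, by omega, by omega, by simp; omega, ?_, by positivity⟩
    rw [hone, Int.cast_one, abs_of_pos (by positivity)]
  · rintro d ⟨wA, wB, -, -, -, -, -, rfl, hd⟩
    exact one_div_le_abs_intCast_div (by positivity) (abs_ne_zero.mp hd)

theorem stmt12 (q : ℕ) (hq : q.Prime) (m n : ℕ)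
    (hm : 1 ≤ m ∧ m ≤ q - 1) (hn : 1 ≤ n ∧ n ≤ q - 1) (hmn : n < m)
    (hcop : Nat.Coprime m n) (hlt : (m : ℝ) / n < (q : ℝ) - 1) :
    IsLeast {d : ℝ | ∃ wA wB : ℤ, 0 ≤ wA ∧ wA ≤ (q : ℤ) - 1 ∧ 0 ≤ wB ∧ wB ≤ (q : ℤ) - 1 ∧
        (wA, wB) ≠ (0, (q : ℤ) - 1) ∧
        d = |((m : ℝ) / n) * (wA : ℝ) + (wB : ℝ) - ((q : ℝ) - 1)| ∧ d ≠ 0}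
      (1 / n) :=
  stmt12_general q m n hm hn hcop
end

section
/- Let q be a prime and η real with 1 < η < q−1. Suppose (w^o_A, w^o_B) ∈ {0,…,q−1}², distinct from (0, q−1), overlaps with the reference: η·w^o_A + w^o_B = q−1. Suppose nonzero α, β ∈ GF(q) satisfy α·w^o_A + β·w^o_B = α·0 + β·(q−1) in GF(q). Then η is rational; writing η = p/r in lowest terms, we have α·r ≡ β·p (mod q). Consequently, for any joint symbol (w_A, w_B) ∈ {0,…,q−1}² with α·w_A + β·w_B = β·(q−1) in GF(q) and η·w_A + w_B ≠ q−1, the quantity |r·(η·w_A + w_B − (q−1))| is a positive integer multiple of q. -/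
theorem stmt17 (q : ℕ) (hq : q.Prime) (η : ℝ) (hη1 : 1 < η) (hη2 : η < (q : ℝ) - 1)
    (woA woB : ℤ)
    (hbounds : 0 ≤ woA ∧ woA ≤ (q : ℤ) - 1 ∧ 0 ≤ woB ∧ woB ≤ (q : ℤ) - 1)
    (hne : (woA, woB) ≠ (0, (q : ℤ) - 1))
    (hover : η * (woA : ℝ) + (woB : ℝ) = (q : ℝ) - 1)
    (α β : ZMod q) (hα : α ≠ 0) (hβ : β ≠ 0)
    (hclu : α * ((woA : ℤ) : ZMod q) + β * ((woB : ℤ) : ZMod q)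
          = α * 0 + β * (((q : ℤ) - 1 : ℤ) : ZMod q))
    (p r : ℤ) (hr : 0 < r) (hcop : IsCoprime p r) (hpr : η = (p : ℝ) / (r : ℝ)) :
    α * ((r : ℤ) : ZMod q) = β * ((p : ℤ) : ZMod q) ∧
    ∀ wA wB : ℤ, 0 ≤ wA → wA ≤ (q : ℤ) - 1 → 0 ≤ wB → wB ≤ (q : ℤ) - 1 →
      α * ((wA : ℤ) : ZMod q) + β * ((wB : ℤ) : ZMod q)
        = β * (((q : ℤ) - 1 : ℤ) : ZMod q) →
      η * (wA : ℝ) + (wB : ℝ) ≠ (q : ℝ) - 1 →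
      ∃ k : ℤ, 0 < k ∧
        |(r : ℝ) * (η * (wA : ℝ) + (wB : ℝ) - ((q : ℝ) - 1))| = (k : ℝ) * (q : ℝ) := by
  haveI : Fact q.Prime := ⟨hq⟩
  have hrR : (r : ℝ) ≠ 0 := by exact_mod_cast hr.ne'
  -- integer identity from the overlap equation
  have hintR : (p : ℝ) * woA + r * woB = r * ((q : ℝ) - 1) := by
    rw [hpr] at hover
    field_simp at hover
    linarith
  have hint : p * woA + r * woB = r * ((q : ℤ) - 1) := by exact_mod_cast hintR
  -- woA ≠ 0
  have hwoA0 : woA ≠ 0 := by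
    intro h
    apply hne
    have : (woB : ℝ) = (q : ℝ) - 1 := by rw [h] at hover; push_cast at hover; linarith
    have hB : woB = (q : ℤ) - 1 := by exact_mod_cast this
    simp [h, hB]
  have hq2 : 2 ≤ (q : ℤ) := by exact_mod_cast hq.two_le
  -- woA is a unit mod q
  have hwoAz : ((woA : ℤ) : ZMod q) ≠ 0 := by
    rw [Ne, ZMod.intCast_zmod_eq_zero_iff_dvd]
    intro hdvd
    have h1 : 0 < woA := lt_of_le_of_ne hbounds.1 (Ne.symm hwoA0)
    have := Int.le_of_dvd h1 hdvd
    have := hbounds.2.1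
    omega
  -- cast the integer identity to ZMod q
  have hintZ : ((p : ℤ) : ZMod q) * ((woA : ℤ) : ZMod q) + ((r : ℤ) : ZMod q) * ((woB : ℤ) : ZMod q)
      = ((r : ℤ) : ZMod q) * (((q : ℤ) - 1 : ℤ) : ZMod q) := by
    have := congrArg (fun n : ℤ => (n : ZMod q)) hint
    push_cast at this ⊢
    linear_combination this
  have part1 : α * ((r : ℤ) : ZMod q) = β * ((p : ℤ) : ZMod q) := by
    have h2 : (α * ((r : ℤ) : ZMod q) - β * ((p : ℤ) : ZMod q)) * ((woA : ℤ) : ZMod q) = 0 := by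
      linear_combination ((r : ℤ) : ZMod q) * hclu - β * hintZ
    rcases mul_eq_zero.mp h2 with h | h
    · exact sub_eq_zero.mp h
    · exact absurd h hwoAz
  refine ⟨part1, ?_⟩
  intro wA wB _ _ _ _ hc hneq
  set N : ℤ := p * wA + r * wB - r * ((q : ℤ) - 1) with hN
  push_cast at hc
  have h3 : β * ((N : ℤ) : ZMod q) = 0 := by
    rw [hN]
    push_cast
    linear_combination ((r : ℤ) : ZMod q) * hc - ((wA : ℤ) : ZMod q) * part1
  have hNz : ((N : ℤ) : ZMod q) = 0 := by
    rcases mul_eq_zero.mp h3 with h | h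
    · exact absurd h hβ
    · exact h
  have hdvd : (q : ℤ) ∣ N := (ZMod.intCast_zmod_eq_zero_iff_dvd N q).mp hNz
  obtain ⟨m, hm⟩ := hdvd
  have hNreal : (N : ℝ) = (r : ℝ) * (η * wA + wB - ((q : ℝ) - 1)) := by
    rw [hpr, hN]
    push_cast
    field_simp
  have hNne : N ≠ 0 := by
    intro h
    rw [h] at hNreal
    simp at hNreal
    rcases hNreal with h' | h'
    · exact absurd h' hr.ne'
    · exact hneq (by linarith)
  have hmne : m ≠ 0 := by rintro rfl; simp at hm; exact hNne hm
  refine ⟨|m|, abs_pos.mpr hmne, ?_⟩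
  rw [← hNreal, hm]
  push_cast
  rw [abs_mul, abs_of_nonneg (by positivity : (0:ℝ) ≤ (q:ℝ))]
  ring
end
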